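/- Define the Laurent polynomials φ(t) = (t−1)^{4m} t^{1−2m} and ψ(t) = (t−1)^{2m}(t+1) t^{−m} for an integer m ≥ 1. Then the map t ↦ (ψ(t)·φ(t)^n, φ(t)) from ℂ* to ℂ² is injective for every integer n ≥ 0. -/

import Mathlib

/-!
Write `φ(t) = (t-1)^{4m} t^{1-2m}` and `ψ(t) = (t-1)^{2m} (t+1) t^{-m}`, so that
`ψ² = φ · (t+1)²/t` and `φ(1/t) = φ(t)/t²`. On `ℂ*`, `φ` can vanish only at `t = 1`. Away from it,
equal values of `φ` and of `ψ φⁿ` give equal values of `ψ`, hence of `(t+1)²/t = t + 2 + 1/t`, so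
`s = t` or `s = 1/t`; in the second case `φ(t) = φ(1/t) = φ(t)/t²` forces `t = ±1 = 1/t`.
-/

namespace SeriesO

variable {K : Type*} [Field K]

def phi (m : ℕ) (t : K) : K := (t - 1) ^ (4 * m) * t ^ ((1 : ℤ) - 2 * m)

def psi (m : ℕ) (t : K) : K := (t - 1) ^ (2 * m) * (t + 1) * t ^ (-(m : ℤ))

theorem eq_one_of_phi_eq_zero {m : ℕ} {t : K} (ht : t ≠ 0) (h : phi m t = 0) : t = 1 :=
  sub_eq_zero.1 <| eq_zero_of_pow_eq_zero <|
    (mul_eq_zero.1 h).resolve_right (zpow_ne_zero _ ht)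

theorem psi_sq (m : ℕ) {t : K} (ht : t ≠ 0) : psi m t ^ 2 = phi m t * ((t + 1) ^ 2 / t) := by
  have hpow : (t ^ (-(m : ℤ))) ^ 2 = t ^ ((1 : ℤ) - 2 * m) / t := by
    rw [← zpow_natCast, ← zpow_mul, div_eq_mul_inv, ← zpow_sub_one₀ ht]
    congr 1; push_cast; ring
  unfold psi phi
  rw [mul_pow, mul_pow, hpow, ← pow_mul]
  ring

theorem phi_inv (m : ℕ) {t : K} (ht : t ≠ 0) : phi m t⁻¹ = phi m t / t ^ 2 := by
  have hsub : t⁻¹ - 1 = -(t - 1) * t⁻¹ := by field_simp; ring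
  have hpow : t⁻¹ ^ ((1 : ℤ) - 2 * m) = t ^ ((1 : ℤ) - 2 * m) * t ^ (4 * m) / t ^ 2 := by
    rw [inv_zpow', show -((1 : ℤ) - 2 * m) = (1 - 2 * m) + ((4 * m : ℕ) : ℤ) - (2 : ℕ) by
      push_cast; ring, zpow_sub₀ ht, zpow_add₀ ht, zpow_natCast, zpow_natCast]
  unfold phi
  rw [hsub, mul_pow, Even.neg_pow ⟨2 * m, by ring⟩, hpow, inv_pow]
  field_simp

theorem eq_or_eq_inv_of_sq_add_one_div_eq {s t : K} (hs : s ≠ 0) (ht : t ≠ 0)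
    (h : (s + 1) ^ 2 / s = (t + 1) ^ 2 / t) : s = t ∨ s = t⁻¹ := by
  rw [div_eq_div_iff hs ht] at h
  have hfac : (s - t) * (s * t - 1) = 0 := by linear_combination h
  rcases mul_eq_zero.1 hfac with h' | h'
  · exact .inl (sub_eq_zero.1 h')
  · exact .inr (eq_inv_of_mul_eq_one_left (sub_eq_zero.1 h'))

theorem inv_eq_self_of_phi_inv_eq {m : ℕ} {t : K} (ht : t ≠ 0) (hφ : phi m t ≠ 0)
    (h : phi m t⁻¹ = phi m t) : t⁻¹ = t := by
  rw [phi_inv m ht, div_eq_iff (pow_ne_zero 2 ht)] at h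
  exact inv_eq_of_mul_eq_one_right (by
    linear_combination mul_left_cancel₀ hφ (h.symm.trans (mul_one _).symm))

theorem injOn_psi_mul_phi_pow_phi (m n : ℕ) :
    Set.InjOn (fun t : K => (psi m t * phi m t ^ n, phi m t)) {t | t ≠ 0} := by
  rintro s (hs : s ≠ 0) t (ht : t ≠ 0) h
  obtain ⟨hψφ, hφ⟩ := Prod.mk.inj h
  by_cases hφt : phi m t = 0
  · rw [eq_one_of_phi_eq_zero ht hφt, eq_one_of_phi_eq_zero hs (hφ.trans hφt)]
  have hψ : psi m s = psi m t := by
    rw [hφ] at hψφ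
    exact mul_right_cancel₀ (pow_ne_zero n hφt) hψφ
  have hA : (s + 1) ^ 2 / s = (t + 1) ^ 2 / t := by
    have hsq := psi_sq m hs
    rw [hψ, psi_sq m ht, hφ] at hsq
    exact (mul_left_cancel₀ hφt hsq).symm
  rcases eq_or_eq_inv_of_sq_add_one_div_eq hs ht hA with rfl | rfl
  · rfl
  · exact inv_eq_self_of_phi_inv_eq ht hφt hφ

end SeriesO

theorem series_o_injective (m : ℕ) (n : ℕ) :
    Set.InjOn
      (fun t : ℂ =>
        (((t - 1) ^ (2 * m) * (t + 1) * t ^ (-(m : ℤ))) *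
            ((t - 1) ^ (4 * m) * t ^ ((1 : ℤ) - 2 * m)) ^ n,
         (t - 1) ^ (4 * m) * t ^ ((1 : ℤ) - 2 * m)))
      {t : ℂ | t ≠ 0} :=
  SeriesO.injOn_psi_mul_phi_pow_phi m n
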